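/- arXiv:1604.08361 — 6 statements merged into one kernel-verified Lean document; each statement's English description precedes it below -/
import Mathlib

section
/- Let U ⊆ ℝ² be open, let h : U → ℝ be twice continuously differentiable, and let λ1, λ2 : U → ℝ be differentiable functions such that at every point of U one has λi² = ∂h/∂x + (∂h/∂y)·λi for i = 1, 2, and λ1 ≠ λ2 at every point of U. Then the two conditions ∂λi/∂x + λi·∂λi/∂y = 0 on U for i = 1, 2 hold if and only if h satisfies the completely exceptional system on U. -/
/-!
Differentiating the characteristic identity `λ² = h_x + h_y λ` along `∂_x + λ ∂_y` and using
`h_xy = h_yx` gives `(2λ - h_y)(λ_x + λ λ_y) = (h_xx + h_x h_yy) + λ (2 h_xy + h_y h_yy) = A + λ B`.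
For two distinct roots `h_y = λ1 + λ2`, so the factors `2λi - h_y = ±(λ1 - λ2)` do not vanish:
both accelerations vanish iff `A + λ B` vanishes at two distinct points, i.e. iff `A = B = 0`.
-/

open Filter Topology

section Algebra

variable {R : Type*} [CommRing R] [NoZeroDivisors R]

theorem add_eq_of_sq_eq_add_mul {a b x y : R} (hxy : x ≠ y)
    (hx : x ^ 2 = a + b * x) (hy : y ^ 2 = a + b * y) : b = x + y := by
  have hprod : (x - y) * (x + y - b) = 0 := by linear_combination hx - hy
  linear_combination -(mul_eq_zero.mp hprod).resolve_left (sub_ne_zero.mpr hxy)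

theorem add_mul_eq_zero_and_add_mul_eq_zero_iff {A B x y : R} (hxy : x ≠ y) :
    (A + x * B = 0 ∧ A + y * B = 0) ↔ (A = 0 ∧ B = 0) := by
  refine ⟨fun ⟨hx, hy⟩ => ?_, fun ⟨hA, hB⟩ => by simp [hA, hB]⟩
  have hB : B = 0 :=
    (mul_eq_zero.mp (by linear_combination hx - hy : (x - y) * B = 0)).resolve_left
      (sub_ne_zero.mpr hxy)
  exact ⟨by simpa [hB] using hx, hB⟩

end Algebra

section Calculus

variable {𝕜 E F : Type*} [RCLike 𝕜] [NormedAddCommGroup E] [NormedSpace 𝕜 E]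
  [NormedAddCommGroup F] [NormedSpace 𝕜 F]

theorem ContDiffAt.differentiableAt_fderiv {f : E → F} {x : E} (hf : ContDiffAt 𝕜 2 f x) :
    DifferentiableAt 𝕜 (fderiv 𝕜 f) x :=
  (hf.fderiv_right (m := 1) le_rfl).differentiableAt one_ne_zero

theorem ContDiffAt.differentiableAt_fderiv_apply {f : E → F} {x : E} (hf : ContDiffAt 𝕜 2 f x)
    (v : E) : DifferentiableAt 𝕜 (fun q => fderiv 𝕜 f q v) x :=
  hf.differentiableAt_fderiv.clm_apply (differentiableAt_const v)

theorem ContDiffAt.fderiv_fderiv_apply_comm {f : E → F} {x : E} (hf : ContDiffAt 𝕜 2 f x)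
    (v w : E) :
    fderiv 𝕜 (fun q => fderiv 𝕜 f q v) x w = fderiv 𝕜 (fun q => fderiv 𝕜 f q w) x v := by
  simp only [fderiv_clm_apply hf.differentiableAt_fderiv (differentiableAt_const _),
    fderiv_const_apply, add_apply, ContinuousLinearMap.comp_apply, ContinuousLinearMap.flip_apply,
    zero_apply, map_zero, zero_add]
  exact (hf.isSymmSndFDerivAt (by simp)).eq w v

theorem fderiv_of_sq_eq_add_mul {a b l : E → 𝕜} {x : E} (ha : DifferentiableAt 𝕜 a x)
    (hb : DifferentiableAt 𝕜 b x) (hl : DifferentiableAt 𝕜 l x)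
    (hroot : ∀ᶠ q in 𝓝 x, l q ^ 2 = a q + b q * l q) (v : E) :
    (2 * l x - b x) * fderiv 𝕜 l x v = fderiv 𝕜 a x v + l x * fderiv 𝕜 b x v := by
  have hsq : HasFDerivAt (fun q => l q ^ 2)
      (fderiv 𝕜 a x + (b x • fderiv 𝕜 l x + l x • fderiv 𝕜 b x)) x :=
    (ha.hasFDerivAt.add (hb.hasFDerivAt.mul hl.hasFDerivAt)).congr_of_eventuallyEq hroot
  have := congrArg (· v) ((hl.hasFDerivAt.pow 2).unique hsq)
  simp only [Nat.add_one_sub_one, pow_one, nsmul_eq_mul, Nat.cast_ofNat, smul_apply, smul_eq_mul,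
    add_apply] at this
  linear_combination this

end Calculus

theorem exceptionality_identity_of_characteristic_root {h l : ℝ × ℝ → ℝ} {p : ℝ × ℝ}
    (hh : ContDiffAt ℝ 2 h p) (hl : DifferentiableAt ℝ l p)
    (hroot : ∀ᶠ q in 𝓝 p, l q ^ 2 = fderiv ℝ h q (1, 0) + fderiv ℝ h q (0, 1) * l q) :
    (2 * l p - fderiv ℝ h p (0, 1)) * (fderiv ℝ l p (1, 0) + l p * fderiv ℝ l p (0, 1)) =
      (fderiv ℝ (fun q => fderiv ℝ h q (1, 0)) p (1, 0) +
          fderiv ℝ h p (1, 0) * fderiv ℝ (fun q => fderiv ℝ h q (0, 1)) p (0, 1)) +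
        l p * (2 * fderiv ℝ (fun q => fderiv ℝ h q (0, 1)) p (1, 0) +
          fderiv ℝ h p (0, 1) * fderiv ℝ (fun q => fderiv ℝ h q (0, 1)) p (0, 1)) := by
  have hx := fderiv_of_sq_eq_add_mul (hh.differentiableAt_fderiv_apply _)
    (hh.differentiableAt_fderiv_apply _) hl hroot (1, 0)
  have hy := fderiv_of_sq_eq_add_mul (hh.differentiableAt_fderiv_apply _)
    (hh.differentiableAt_fderiv_apply _) hl hroot (0, 1)
  linear_combination hx + l p * hy + l p * hh.fderiv_fderiv_apply_comm (1, 0) (0, 1) +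
    fderiv ℝ (fun q => fderiv ℝ h q (0, 1)) p (0, 1) * hroot.self_of_nhds

/-- Let `h` be `C²` on the open set `U ⊆ ℝ²` and let `λ1, λ2` be
differentiable functions on `U` which at every point are the two distinct roots of the
characteristic equation `λ² = h_x + h_y·λ`.  Then the complete exceptionality conditions
`∂λi/∂x + λi·∂λi/∂y = 0` (i = 1,2) hold on `U` iff `h` satisfies the completely
exceptional system `h_xx + h_x·h_yy = 0`, `2h_xy + h_y·h_yy = 0` on `U`. -/
theorem completely_exceptional_iff_roots_have_zero_acceleration
    (U : Set (ℝ × ℝ)) (hU : IsOpen U)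
    (h l1 l2 : ℝ × ℝ → ℝ)
    (hh : ContDiffOn ℝ 2 h U)
    (hl1 : DifferentiableOn ℝ l1 U) (hl2 : DifferentiableOn ℝ l2 U)
    (hchar1 : ∀ p ∈ U, (l1 p) ^ 2 = fderiv ℝ h p (1, 0) + fderiv ℝ h p (0, 1) * l1 p)
    (hchar2 : ∀ p ∈ U, (l2 p) ^ 2 = fderiv ℝ h p (1, 0) + fderiv ℝ h p (0, 1) * l2 p)
    (hne : ∀ p ∈ U, l1 p ≠ l2 p) :
    (∀ p ∈ U,
        fderiv ℝ l1 p (1, 0) + l1 p * fderiv ℝ l1 p (0, 1) = 0 ∧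
        fderiv ℝ l2 p (1, 0) + l2 p * fderiv ℝ l2 p (0, 1) = 0) ↔
    (∀ p ∈ U,
        fderiv ℝ (fun q => fderiv ℝ h q (1, 0)) p (1, 0) +
            fderiv ℝ h p (1, 0) * fderiv ℝ (fun q => fderiv ℝ h q (0, 1)) p (0, 1) = 0 ∧
        2 * fderiv ℝ (fun q => fderiv ℝ h q (0, 1)) p (1, 0) +
            fderiv ℝ h p (0, 1) * fderiv ℝ (fun q => fderiv ℝ h q (0, 1)) p (0, 1) = 0) := by
  refine forall₂_congr fun p hp => ?_
  have hU_nhds : U ∈ 𝓝 p := hU.mem_nhds hp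
  have hsum : fderiv ℝ h p (0, 1) = l1 p + l2 p :=
    add_eq_of_sq_eq_add_mul (hne p hp) (hchar1 p hp) (hchar2 p hp)
  have key1 := exceptionality_identity_of_characteristic_root (hh.contDiffAt hU_nhds)
    (hl1.differentiableAt hU_nhds) (eventually_of_mem hU_nhds hchar1)
  have key2 := exceptionality_identity_of_characteristic_root (hh.contDiffAt hU_nhds)
    (hl2.differentiableAt hU_nhds) (eventually_of_mem hU_nhds hchar2)
  have hne1 : 2 * l1 p - fderiv ℝ h p (0, 1) ≠ 0 := by
    rw [hsum, show 2 * l1 p - (l1 p + l2 p) = l1 p - l2 p by ring]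
    exact sub_ne_zero.mpr (hne p hp)
  have hne2 : 2 * l2 p - fderiv ℝ h p (0, 1) ≠ 0 := by
    rw [hsum, show 2 * l2 p - (l1 p + l2 p) = l2 p - l1 p by ring]
    exact sub_ne_zero.mpr (hne p hp).symm
  refine (and_congr (mul_eq_zero_iff_left hne1) (mul_eq_zero_iff_left hne2)).symm.trans ?_
  rw [key1, key2]
  exact add_mul_eq_zero_and_add_mul_eq_zero_iff (hne p hp)
end

section
/- Let k0, k1, k2, k3, k4 ∈ ℝ and let U = {(x,y) ∈ ℝ² : k0·x + k3 ≠ 0}. Define h : U → ℝ by h(x,y) = (k0·y² − k1·x − k2·y − k4)/(k0·x + k3) (so that p22 = h solves the Monge–Ampère equation k0(p11·p22 − p12²) + k1·p11 + k2·p12 + k3·p22 + k4 = 0). Then h satisfies the completely exceptional system at every point of U. -/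
/-!
Write `D = k0 x + k3`. On the open set `D ≠ 0` the function `h` satisfies
`D h = k0 y² - k1 x - k2 y - k4`. Differentiating this once gives `D h_x = -k1 - k0 h` and
`D h_y = 2 k0 y - k2`, and differentiating these again gives `D h_xx = -2 k0 h_x`,
`D h_xy = -k0 h_y` and `D h_yy = 2 k0`. Multiplied by `D`, both equations of the completely
exceptional system become identities.
-/

/-- The function `h` solving the Monge–Ampère equation
`k0(p11·p22 − p12²) + k1·p11 + k2·p12 + k3·p22 + k4 = 0` for `p22`,
as a function of `(x, y) = (p11, p12)`. -/
noncomputable def hMA (k0 k1 k2 k3 k4 : ℝ) (q : ℝ × ℝ) : ℝ :=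
  (k0 * q.2 ^ 2 - k1 * q.1 - k2 * q.2 - k4) / (k0 * q.1 + k3)

open Filter Topology ContinuousLinearMap

theorem HasFDerivAt.mul_apply_of_eventuallyEq {E : Type*} [NormedAddCommGroup E]
    [NormedSpace ℝ E] {a f g : E → ℝ} {a' g' : E →L[ℝ] ℝ} {x : E}
    (ha : HasFDerivAt a a' x) (hf : DifferentiableAt ℝ f x) (hg : HasFDerivAt g g' x)
    (hafg : (fun y => a y * f y) =ᶠ[𝓝 x] g) (v : E) :
    a x * fderiv ℝ f x v + f x * a' v = g' v := by
  have hprod := (ha.mul hf.hasFDerivAt).congr_of_eventuallyEq hafg.symm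
  simpa using congrArg (· v) (hprod.unique hg)

section MongeAmpere

variable (k0 k1 k2 k3 k4 : ℝ)

theorem hasFDerivAt_mongeAmpere_den (q : ℝ × ℝ) :
    HasFDerivAt (fun q : ℝ × ℝ => k0 * q.1 + k3) (k0 • fst ℝ ℝ ℝ) q :=
  (hasFDerivAt_fst.const_mul k0).add_const k3

theorem hasFDerivAt_mongeAmpere_num (q : ℝ × ℝ) :
    HasFDerivAt (fun q : ℝ × ℝ => k0 * q.2 ^ 2 - k1 * q.1 - k2 * q.2 - k4)
      ((2 * k0 * q.2 - k2) • snd ℝ ℝ ℝ - k1 • fst ℝ ℝ ℝ) q := by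
  have hsq : HasFDerivAt (fun q : ℝ × ℝ => q.2 ^ 2) ((2 * q.2) • snd ℝ ℝ ℝ) q := by
    simpa using (hasFDerivAt_snd (𝕜 := ℝ) (E := ℝ) (F := ℝ) (p := q)).pow 2
  refine ((((hsq.const_mul k0).sub (hasFDerivAt_fst.const_mul k1)).sub
    (hasFDerivAt_snd.const_mul k2)).sub_const k4).congr_fderiv ?_
  ext <;> simp [mul_comm, mul_left_comm]

theorem eventually_mongeAmpere_den_ne_zero {p : ℝ × ℝ} (hp : k0 * p.1 + k3 ≠ 0) :
    ∀ᶠ q in 𝓝 p, k0 * q.1 + k3 ≠ 0 :=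
  (hasFDerivAt_mongeAmpere_den k0 k3 p).continuousAt.eventually_ne hp

theorem contDiffAt_hMA {q : ℝ × ℝ} (hq : k0 * q.1 + k3 ≠ 0) :
    ContDiffAt ℝ 2 (hMA k0 k1 k2 k3 k4) q := by
  unfold hMA
  fun_prop (disch := exact hq)

theorem differentiableAt_fderiv_hMA_apply {p : ℝ × ℝ} (hp : k0 * p.1 + k3 ≠ 0) (v : ℝ × ℝ) :
    DifferentiableAt ℝ (fun q => fderiv ℝ (hMA k0 k1 k2 k3 k4) q v) p :=
  (((contDiffAt_hMA k0 k1 k2 k3 k4 hp).fderiv_right le_rfl).differentiableAt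
    one_ne_zero).clm_apply (differentiableAt_const v)

theorem mongeAmpere_den_mul_hMA {p : ℝ × ℝ} (hp : k0 * p.1 + k3 ≠ 0) :
    (fun q : ℝ × ℝ => (k0 * q.1 + k3) * hMA k0 k1 k2 k3 k4 q) =ᶠ[𝓝 p]
      fun q => k0 * q.2 ^ 2 - k1 * q.1 - k2 * q.2 - k4 :=
  (eventually_mongeAmpere_den_ne_zero k0 k3 hp).mono fun _ hq => mul_div_cancel₀ _ hq

theorem mongeAmpere_den_mul_fderiv_hMA {q : ℝ × ℝ} (hq : k0 * q.1 + k3 ≠ 0) :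
    (k0 * q.1 + k3) * fderiv ℝ (hMA k0 k1 k2 k3 k4) q (1, 0) = -k1 - k0 * hMA k0 k1 k2 k3 k4 q ∧
    (k0 * q.1 + k3) * fderiv ℝ (hMA k0 k1 k2 k3 k4) q (0, 1) = 2 * k0 * q.2 - k2 := by
  have key := (hasFDerivAt_mongeAmpere_den k0 k3 q).mul_apply_of_eventuallyEq
    ((contDiffAt_hMA k0 k1 k2 k3 k4 hq).differentiableAt two_ne_zero)
    (hasFDerivAt_mongeAmpere_num k0 k1 k2 k4 q) (mongeAmpere_den_mul_hMA k0 k1 k2 k3 k4 hq)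
  have h10 := key (1, 0)
  have h01 := key (0, 1)
  simp only [smul_apply, sub_apply, coe_fst', coe_snd', smul_eq_mul] at h10 h01
  exact ⟨by linear_combination h10, by linear_combination h01⟩

theorem mongeAmpere_den_mul_second_fderiv_hMA {p : ℝ × ℝ} (hp : k0 * p.1 + k3 ≠ 0) :
    (k0 * p.1 + k3) * fderiv ℝ (fun q => fderiv ℝ (hMA k0 k1 k2 k3 k4) q (1, 0)) p (1, 0) =
      -2 * k0 * fderiv ℝ (hMA k0 k1 k2 k3 k4) p (1, 0) ∧
    (k0 * p.1 + k3) * fderiv ℝ (fun q => fderiv ℝ (hMA k0 k1 k2 k3 k4) q (0, 1)) p (1, 0) =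
      -k0 * fderiv ℝ (hMA k0 k1 k2 k3 k4) p (0, 1) ∧
    (k0 * p.1 + k3) * fderiv ℝ (fun q => fderiv ℝ (hMA k0 k1 k2 k3 k4) q (0, 1)) p (0, 1) =
      2 * k0 := by
  have hU := eventually_mongeAmpere_den_ne_zero k0 k3 hp
  have hh := ((contDiffAt_hMA k0 k1 k2 k3 k4 hp).differentiableAt two_ne_zero).hasFDerivAt
  have keyX := (hasFDerivAt_mongeAmpere_den k0 k3 p).mul_apply_of_eventuallyEq
    (differentiableAt_fderiv_hMA_apply k0 k1 k2 k3 k4 hp (1, 0))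
    ((hh.const_mul k0).const_sub (-k1))
    (hU.mono fun q hq => (mongeAmpere_den_mul_fderiv_hMA k0 k1 k2 k3 k4 hq).1)
  have keyY := (hasFDerivAt_mongeAmpere_den k0 k3 p).mul_apply_of_eventuallyEq
    (differentiableAt_fderiv_hMA_apply k0 k1 k2 k3 k4 hp (0, 1))
    (((hasFDerivAt_snd (p := p)).const_mul (2 * k0)).sub_const k2)
    (hU.mono fun q hq => (mongeAmpere_den_mul_fderiv_hMA k0 k1 k2 k3 k4 hq).2)
  have hxx := keyX (1, 0)
  have hxy := keyY (1, 0)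
  have hyy := keyY (0, 1)
  simp only [smul_apply, neg_apply, coe_fst', coe_snd', smul_eq_mul] at hxx hxy hyy
  exact ⟨by linear_combination hxx, by linear_combination hxy, by linear_combination hyy⟩

end MongeAmpere

/-- the solution `h` of a Monge–Ampère equation satisfies the completely
exceptional system `h_xx + h_x·h_yy = 0`, `2h_xy + h_y·h_yy = 0` at every point where
`k0·x + k3 ≠ 0`. -/
theorem mongeAmpere_solution_is_completely_exceptional
    (k0 k1 k2 k3 k4 : ℝ) (p : ℝ × ℝ) (hp : k0 * p.1 + k3 ≠ 0) :
    fderiv ℝ (fun q => fderiv ℝ (hMA k0 k1 k2 k3 k4) q (1, 0)) p (1, 0) +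
        fderiv ℝ (hMA k0 k1 k2 k3 k4) p (1, 0) *
          fderiv ℝ (fun q => fderiv ℝ (hMA k0 k1 k2 k3 k4) q (0, 1)) p (0, 1) = 0 ∧
    2 * fderiv ℝ (fun q => fderiv ℝ (hMA k0 k1 k2 k3 k4) q (0, 1)) p (1, 0) +
        fderiv ℝ (hMA k0 k1 k2 k3 k4) p (0, 1) *
          fderiv ℝ (fun q => fderiv ℝ (hMA k0 k1 k2 k3 k4) q (0, 1)) p (0, 1) = 0 := by
  obtain ⟨hxx, hxy, hyy⟩ := mongeAmpere_den_mul_second_fderiv_hMA k0 k1 k2 k3 k4 hp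
  constructor
  · refine (mul_eq_zero.mp ?_).resolve_left hp
    linear_combination hxx + fderiv ℝ (hMA k0 k1 k2 k3 k4) p (1, 0) * hyy
  · refine (mul_eq_zero.mp ?_).resolve_left hp
    linear_combination 2 * hxy + fderiv ℝ (hMA k0 k1 k2 k3 k4) p (0, 1) * hyy
end

section
/- Let k0, k1, k2, k3, k4 ∈ ℝ, let U = {(x,y) ∈ ℝ² : k0·x + k3 ≠ 0}, and define h : U → ℝ by h(x,y) = (k0·y² − k1·x − k2·y − k4)/(k0·x + k3). Set Δ = k2² − 4·k1·k3 + 4·k0·k4. Then at every point of U one has 4·(∂h/∂x) + (∂h/∂y)² = Δ/(k0·x + k3)². -/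
/-!
Write `h = N / D` with `N = k0 y² − k1 x − k2 y − k4` and `D = k0 x + k3`. The quotient rule
gives `h_x = −(k1 D + k0 N) / D²` and `h_y = (2 k0 y − k2) / D`, so
`D² (4 h_x + h_y²) = −4 k1 D − 4 k0 N + (2 k0 y − k2)²`, in which every term containing
`x` or `y` cancels and `k2² − 4 k1 k3 + 4 k0 k4` remains.
-/

section PartialDerivatives

variable {𝕜 E : Type*} [NontriviallyNormedField 𝕜] [NormedAddCommGroup E] [NormedSpace 𝕜 E]
  {f : 𝕜 × 𝕜 → E} {p : 𝕜 × 𝕜}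

theorem fderiv_apply_one_zero_eq_deriv (hf : DifferentiableAt 𝕜 f p) :
    fderiv 𝕜 f p (1, 0) = deriv (fun x => f (x, p.2)) p.1 :=
  (hf.hasFDerivAt.comp_hasDerivAt p.1
    ((hasDerivAt_id p.1).prodMk (hasDerivAt_const p.1 p.2))).deriv.symm

theorem fderiv_apply_zero_one_eq_deriv (hf : DifferentiableAt 𝕜 f p) :
    fderiv 𝕜 f p (0, 1) = deriv (fun y => f (p.1, y)) p.2 :=
  (hf.hasFDerivAt.comp_hasDerivAt p.2
    ((hasDerivAt_const p.2 p.1).prodMk (hasDerivAt_id p.2))).deriv.symm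

end PartialDerivatives

section MongeAmpere

variable {k0 k1 k2 k3 k4 : ℝ} {p : ℝ × ℝ}

theorem differentiableAt_hMA (hp : k0 * p.1 + k3 ≠ 0) :
    DifferentiableAt ℝ (hMA k0 k1 k2 k3 k4) p := by
  unfold hMA
  fun_prop (disch := exact hp)

theorem hasDerivAt_hMA_fst (hp : k0 * p.1 + k3 ≠ 0) :
    HasDerivAt (fun x => hMA k0 k1 k2 k3 k4 (x, p.2))
      (-(k1 * (k0 * p.1 + k3) + k0 * (k0 * p.2 ^ 2 - k1 * p.1 - k2 * p.2 - k4)) /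
        (k0 * p.1 + k3) ^ 2) p.1 := by
  have hN : HasDerivAt (fun x => k0 * p.2 ^ 2 - k1 * x - k2 * p.2 - k4) (-k1) p.1 := by
    simpa using ((((hasDerivAt_id' p.1).const_mul k1).const_sub (k0 * p.2 ^ 2)).sub_const
      (k2 * p.2)).sub_const k4
  have hD : HasDerivAt (fun x => k0 * x + k3) k0 p.1 := by
    simpa using ((hasDerivAt_id' p.1).const_mul k0).add_const k3
  exact (hN.fun_div hD hp).congr_deriv (by ring)

theorem hasDerivAt_hMA_snd :
    HasDerivAt (fun y => hMA k0 k1 k2 k3 k4 (p.1, y))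
      ((2 * k0 * p.2 - k2) / (k0 * p.1 + k3)) p.2 := by
  have hN : HasDerivAt (fun y => k0 * y ^ 2 - k1 * p.1 - k2 * y - k4) (2 * k0 * p.2 - k2) p.2 := by
    refine ((((hasDerivAt_pow 2 p.2).const_mul k0).sub_const (k1 * p.1)).sub
      ((hasDerivAt_id' p.2).const_mul k2)).sub_const k4 |>.congr_deriv ?_
    push_cast
    ring
  exact hN.div_const (k0 * p.1 + k3)

end MongeAmpere

/-- for the solution `h` of a Monge–Ampère equation with discriminant
`Δ = k2² − 4k1k3 + 4k0k4`, at every point where `k0·x + k3 ≠ 0` one has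
`4·h_x + (h_y)² = Δ/(k0·x + k3)²`. -/
theorem mongeAmpere_discriminant_identity
    (k0 k1 k2 k3 k4 : ℝ) (p : ℝ × ℝ) (hp : k0 * p.1 + k3 ≠ 0) :
    4 * fderiv ℝ (hMA k0 k1 k2 k3 k4) p (1, 0) +
        (fderiv ℝ (hMA k0 k1 k2 k3 k4) p (0, 1)) ^ 2 =
      (k2 ^ 2 - 4 * k1 * k3 + 4 * k0 * k4) / (k0 * p.1 + k3) ^ 2 := by
  have hh : DifferentiableAt ℝ (hMA k0 k1 k2 k3 k4) p := differentiableAt_hMA hp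
  rw [fderiv_apply_one_zero_eq_deriv hh, fderiv_apply_zero_one_eq_deriv hh,
    (hasDerivAt_hMA_fst hp).deriv, hasDerivAt_hMA_snd.deriv]
  field_simp
  ring
end

section
/- Let U ⊆ ℝ³ be open and let F : U → ℝ be twice continuously differentiable, with variables denoted (p11, p12, p22). Assume that ∂F/∂p22 ≠ 0 at every point of U and that (∂F/∂p12)² = 4·(∂F/∂p11)·(∂F/∂p22) at every point of U. Define λ : U → ℝ by λ = −(∂F/∂p12)/(2·∂F/∂p22). Then ∂λ/∂p11 + λ·(∂λ/∂p12) + λ²·(∂λ/∂p22) = 0 at every point of U. -/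
/-!
By the discriminant condition, the symbol `S_q(μ) = F_{p11}(q) + μ F_{p12}(q) + μ² F_{p22}(q)`
satisfies `4 F_{p22}(q) S_q(μ) = (2 F_{p22}(q) μ + F_{p12}(q))²` on `U`. For `μ = λ(p)` the
right-hand side is the square of a function vanishing at `p`, so `q ↦ S_q(λ(p))` is critical
at `p`. By symmetry of the Hessian, every first partial of `F` then has zero derivative at `p`
in the direction `v = (1, λ(p), λ(p)²)`; hence so does the quotient `λ`, and that directional
derivative is `λ_{p11} + λ λ_{p12} + λ² λ_{p22}`.
-/

open Filter Topology

theorem map_triple {R M Fₗ : Type*} [CommSemiring R] [AddCommMonoid M] [Module R M]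
    [FunLike Fₗ (R × R × R) M] [LinearMapClass Fₗ R (R × R × R) M] (f : Fₗ) (x y z : R) :
    f (x, y, z) = x • f (1, 0, 0) + y • f (0, 1, 0) + z • f (0, 0, 1) := by
  rw [← map_smul, ← map_smul, ← map_smul, ← map_add, ← map_add]
  simp

section

variable {𝕜 E : Type*} [NontriviallyNormedField 𝕜] [NormedAddCommGroup E] [NormedSpace 𝕜 E]
  {p : E}

theorem hasFDerivAt_fderiv_apply {G : Type*} [NormedAddCommGroup G] [NormedSpace 𝕜 G]
    {F : E → G} (hd : DifferentiableAt 𝕜 (fderiv 𝕜 F) p) (u : E) :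
    HasFDerivAt (fun q => fderiv 𝕜 F q u) ((fderiv 𝕜 (fderiv 𝕜 F) p).flip u) p := by
  simpa using hd.hasFDerivAt.clm_apply (hasFDerivAt_const u p)

theorem HasFDerivAt.eq_zero_of_mul_eventuallyEq_sq {c s r : E → 𝕜} {s' : E →L[𝕜] 𝕜}
    (hc : DifferentiableAt 𝕜 c p) (hs : HasFDerivAt s s' p) (hr : DifferentiableAt 𝕜 r p)
    (h : (fun q => c q * s q) =ᶠ[𝓝 p] fun q => r q ^ 2) (hr0 : r p = 0) (hc0 : c p ≠ 0) :
    s' = 0 := by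
  have hs0 : s p = 0 := by
    simpa [hr0, hc0] using h.eq_of_nhds
  have hderiv := (hc.hasFDerivAt.fun_mul hs).unique
    ((hr.hasFDerivAt.pow 2).congr_of_eventuallyEq h)
  ext v
  simpa [hs0, hr0, hc0] using DFunLike.congr_fun hderiv v

theorem HasFDerivAt.fderiv_div_apply_eq_zero {f g : E → 𝕜} {f' g' : E →L[𝕜] 𝕜}
    (hf : HasFDerivAt f f' p) (hg : HasFDerivAt g g' p) (hg0 : g p ≠ 0) {v : E}
    (hfv : f' v = 0) (hgv : g' v = 0) : fderiv 𝕜 (fun q => f q / g q) p v = 0 := by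
  have hinv : HasFDerivAt (fun q => (g q)⁻¹) ((-(g p ^ 2)⁻¹) • g') p :=
    (hasDerivAt_inv hg0).comp_hasFDerivAt p hg
  simp only [div_eq_mul_inv, (hf.fun_mul hinv).fderiv]
  simp [hfv, hgv]

end

theorem fderiv_fderiv_flip_eq_zero_of_discr_eq_zero {F : ℝ × ℝ × ℝ → ℝ} {p : ℝ × ℝ × ℝ} {μ : ℝ}
    (hd : DifferentiableAt ℝ (fderiv ℝ F) p) (hF3 : fderiv ℝ F p (0, 0, 1) ≠ 0)
    (hdisc : ∀ᶠ q in 𝓝 p,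
      (fderiv ℝ F q (0, 1, 0)) ^ 2 = 4 * fderiv ℝ F q (1, 0, 0) * fderiv ℝ F q (0, 0, 1))
    (hμ : 2 * fderiv ℝ F p (0, 0, 1) * μ + fderiv ℝ F p (0, 1, 0) = 0) :
    (fderiv ℝ (fderiv ℝ F) p).flip (1, μ, μ ^ 2) = 0 := by
  have hpartial := hasFDerivAt_fderiv_apply hd
  refine HasFDerivAt.eq_zero_of_mul_eventuallyEq_sq
    (c := fun q => 4 * fderiv ℝ F q (0, 0, 1))
    (r := fun q => 2 * fderiv ℝ F q (0, 0, 1) * μ + fderiv ℝ F q (0, 1, 0))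
    ((hpartial _).differentiableAt.const_mul 4) (hpartial _)
    ((((hpartial _).differentiableAt.const_mul 2).mul_const μ).add (hpartial _).differentiableAt)
    ?_ hμ (mul_ne_zero four_ne_zero hF3)
  filter_upwards [hdisc] with q hq
  rw [map_triple (fderiv ℝ F q) 1]
  simp only [smul_eq_mul]
  linear_combination -hq

/-- parabolic second-order PDEs are completely exceptional.  If `F` is `C²`
on the open set `U ⊆ ℝ³` (variables `(p11, p12, p22)`), with `F_{p22} ≠ 0` and
`(F_{p12})² = 4·F_{p11}·F_{p22}` on `U`, then the unique characteristic root
`λ = −F_{p12}/(2F_{p22})` satisfies `λ_{p11} + λ·λ_{p12} + λ²·λ_{p22} = 0` on `U`. -/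
theorem parabolic_is_completely_exceptional
    (U : Set (ℝ × ℝ × ℝ)) (hU : IsOpen U) (F : ℝ × ℝ × ℝ → ℝ)
    (hF : ContDiffOn ℝ 2 F U)
    (hF3 : ∀ p ∈ U, fderiv ℝ F p (0, 0, 1) ≠ 0)
    (hdisc : ∀ p ∈ U,
        (fderiv ℝ F p (0, 1, 0)) ^ 2 = 4 * fderiv ℝ F p (1, 0, 0) * fderiv ℝ F p (0, 0, 1)) :
    let lam : ℝ × ℝ × ℝ → ℝ := fun q => -(fderiv ℝ F q (0, 1, 0)) / (2 * fderiv ℝ F q (0, 0, 1))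
    ∀ p ∈ U,
      fderiv ℝ lam p (1, 0, 0) + lam p * fderiv ℝ lam p (0, 1, 0) +
        (lam p) ^ 2 * fderiv ℝ lam p (0, 0, 1) = 0 := by
  intro lam p hp
  have hFp : ContDiffAt ℝ 2 F p := hF.contDiffAt (hU.mem_nhds hp)
  have hd : DifferentiableAt ℝ (fderiv ℝ F) p :=
    (hFp.fderiv_right (m := 1) le_rfl).differentiableAt one_ne_zero
  have hc : fderiv ℝ F p (0, 0, 1) ≠ 0 := hF3 p hp
  have hroot : 2 * fderiv ℝ F p (0, 0, 1) * lam p + fderiv ℝ F p (0, 1, 0) = 0 := by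
    simp only [lam]
    field_simp
    ring
  have hker := fderiv_fderiv_flip_eq_zero_of_discr_eq_zero hd hc
    (eventually_of_mem (hU.mem_nhds hp) hdisc) hroot
  have hdir (u : ℝ × ℝ × ℝ) : (fderiv ℝ (fderiv ℝ F) p).flip u (1, lam p, lam p ^ 2) = 0 := by
    rw [ContinuousLinearMap.flip_apply, hFp.isSymmSndFDerivAt (by simp),
      ← ContinuousLinearMap.flip_apply, hker, zero_apply]
  have hlin := map_triple (fderiv ℝ lam p) 1 (lam p) (lam p ^ 2)
  simp only [smul_eq_mul, one_mul] at hlin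
  rw [← hlin]
  exact (hasFDerivAt_fderiv_apply hd _).neg.fderiv_div_apply_eq_zero
    ((hasFDerivAt_fderiv_apply hd _).const_mul 2) (mul_ne_zero two_ne_zero hc)
    (by simp [hdir]) (by simp [hdir])
end

section
/- Let h1, h2, e11, e12, e22 be real numbers with h1 ≠ 0, h2 ≠ 0 and 4·h1 + h2² ≠ 0. Then the three equations (i) 2·e11·h1 + e11·h2² − 2·h1·h2·e12 + 2·h1²·e22 = 0, (ii) 4·e12·h1 − h2·e11 + h2·h1·e22 = 0, (iii) 2·h1·e22 + e22·h2² + 2·e11 + 2·h2·e12 = 0 hold simultaneously if and only if e11 + h1·e22 = 0 and 2·e12 + h2·e22 = 0. -/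
section

variable {R : Type*} [CommRing R]

/-- Graph surface `p22 = h`, with `h1 = h_{p11}`, `h2 = h_{p12}`, `e11 = h_{p11 p11}`,
`e12 = h_{p11 p12}`, `e22 = h_{p12 p12}`. -/
def TraceFreeSecondFundamentalFormVanishes (h1 h2 e11 e12 e22 : R) : Prop :=
  2 * e11 * h1 + e11 * h2 ^ 2 - 2 * h1 * h2 * e12 + 2 * h1 ^ 2 * e22 = 0 ∧
    4 * e12 * h1 - h2 * e11 + h2 * h1 * e22 = 0 ∧
    2 * h1 * e22 + e22 * h2 ^ 2 + 2 * e11 + 2 * h2 * e12 = 0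

def IsCompletelyExceptional (h1 h2 e11 e12 e22 : R) : Prop :=
  e11 + h1 * e22 = 0 ∧ 2 * e12 + h2 * e22 = 0

theorem IsCompletelyExceptional.traceFreeSecondFundamentalFormVanishes
    {h1 h2 e11 e12 e22 : R} (h : IsCompletelyExceptional h1 h2 e11 e12 e22) :
    TraceFreeSecondFundamentalFormVanishes h1 h2 e11 e12 e22 := by
  obtain ⟨hA, hB⟩ := h
  exact ⟨by linear_combination (2 * h1 + h2 ^ 2) * hA - h1 * h2 * hB,
    by linear_combination (-h2) * hA + 2 * h1 * hB,
    by linear_combination 2 * hA + h2 * hB⟩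

theorem TraceFreeSecondFundamentalFormVanishes.isCompletelyExceptional
    [NoZeroDivisors R] [NeZero (2 : R)] {h1 h2 e11 e12 e22 : R}
    (hnd : 4 * h1 + h2 ^ 2 ≠ 0) (h : TraceFreeSecondFundamentalFormVanishes h1 h2 e11 e12 e22) :
    IsCompletelyExceptional h1 h2 e11 e12 e22 := by
  obtain ⟨-, h₂, h₃⟩ := h
  -- Eliminating `e11` between the last two equations leaves the nondegeneracy factor.
  have hB : 2 * e12 + h2 * e22 = 0 := by
    have key : (4 * h1 + h2 ^ 2) * (2 * e12 + h2 * e22) = 0 := by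
      linear_combination h2 * h₃ + 2 * h₂
    exact (mul_eq_zero.mp key).resolve_left hnd
  have hA : 2 * (e11 + h1 * e22) = 0 := by linear_combination h₃ - h2 * hB
  exact ⟨(mul_eq_zero.mp hA).resolve_left two_ne_zero, hB⟩

theorem traceFreeSecondFundamentalFormVanishes_iff_isCompletelyExceptional
    [NoZeroDivisors R] [NeZero (2 : R)] {h1 h2 e11 e12 e22 : R} (hnd : 4 * h1 + h2 ^ 2 ≠ 0) :
    TraceFreeSecondFundamentalFormVanishes h1 h2 e11 e12 e22 ↔
      IsCompletelyExceptional h1 h2 e11 e12 e22 :=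
  ⟨(·.isCompletelyExceptional hnd), (·.traceFreeSecondFundamentalFormVanishes)⟩

end

theorem traceFree_secondFundamentalForm_iff_completely_exceptional_general
    (h1 h2 e11 e12 e22 : ℝ) (hnd : 4 * h1 + h2 ^ 2 ≠ 0) :
    (2 * e11 * h1 + e11 * h2 ^ 2 - 2 * h1 * h2 * e12 + 2 * h1 ^ 2 * e22 = 0 ∧
     4 * e12 * h1 - h2 * e11 + h2 * h1 * e22 = 0 ∧
     2 * h1 * e22 + e22 * h2 ^ 2 + 2 * e11 + 2 * h2 * e12 = 0) ↔
    (e11 + h1 * e22 = 0 ∧ 2 * e12 + h2 * e22 = 0) :=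
  traceFreeSecondFundamentalFormVanishes_iff_isCompletelyExceptional hnd

/-- with `h1 ≠ 0`, `h2 ≠ 0` and `4h1 + h2² ≠ 0`, the three equations
expressing the vanishing of the trace-free second fundamental form of the graph surface
hold simultaneously iff the completely exceptional system
`e11 + h1·e22 = 0`, `2e12 + h2·e22 = 0` holds. -/
theorem traceFree_secondFundamentalForm_iff_completely_exceptional
    (h1 h2 e11 e12 e22 : ℝ) (hh1 : h1 ≠ 0) (hh2 : h2 ≠ 0) (hnd : 4 * h1 + h2 ^ 2 ≠ 0) :
    (2 * e11 * h1 + e11 * h2 ^ 2 - 2 * h1 * h2 * e12 + 2 * h1 ^ 2 * e22 = 0 ∧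
     4 * e12 * h1 - h2 * e11 + h2 * h1 * e22 = 0 ∧
     2 * h1 * e22 + e22 * h2 ^ 2 + 2 * e11 + 2 * h2 * e12 = 0) ↔
    (e11 + h1 * e22 = 0 ∧ 2 * e12 + h2 * e22 = 0) :=
  traceFree_secondFundamentalForm_iff_completely_exceptional_general h1 h2 e11 e12 e22 hnd
end

section
/- Let f : ℝ³ → ℝ be a smooth function of variables (a,b,c). Then the following are equivalent: (i) for every (a,b,c) ∈ ℝ³ and every (s,t) ∈ ℝ², the second derivative of the function τ ↦ f(a + τ·s², b + τ·s·t, c + τ·t²) vanishes identically; (ii) there exist real constants k0, k1, k2, k3, k4 such that f(a,b,c) = k0·(a·c − b²) + k1·a + k2·b + k3·c + k4 for all (a,b,c) ∈ ℝ³. -/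
/-!
Along a line `τ ↦ p + τ v` with `v = (s², st, t²)` the quadric `ac − b²` is affine, because
its quadratic part vanishes on `v`; so the Monge–Ampère functions are affine on rank-one lines,
and for a `C²` function this is exactly condition (i). Conversely, a function `g` affine on
rank-one lines is bilinear in `(a, c)` on each plane `b = const`, and the lines in direction
`(1, 1, 1)` from the plane `b = 0` show that `g` is determined by its restriction to the planes
`b = 0` and `b = 1`. After subtracting the Monge–Ampère function with the same values at five
points, `g` vanishes on `b = 0` and is `b` times a bilinear function of `(a − b, c − b)`;
affinity of this cubic along two more rank-one lines forces it to vanish.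
-/

theorem forall_iteratedDeriv_two_eq_zero_iff {F : ℝ → ℝ} (hF : ContDiff ℝ 2 F) :
    (∀ τ, iteratedDeriv 2 F τ = 0) ↔ ∀ τ, F τ = F 0 + τ * (F 1 - F 0) := by
  refine ⟨fun h τ => ?_, fun h τ => by rw [funext h]; simp [iteratedDeriv_succ]⟩
  have hF' : Differentiable ℝ F := hF.differentiable (by norm_num)
  have hF'' : Differentiable ℝ (deriv F) := (hF.iterate_deriv' 1 1).differentiable one_ne_zero
  set m := deriv F 0
  have hslope : ∀ x, deriv F x = m :=
    fun x => is_const_of_deriv_eq_zero hF'' (by simpa [iteratedDeriv_succ] using h) x 0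
  have hline : ∀ x, F x - m * x = F 0 := fun x => by
    have hderiv y := ((hF' y).hasDerivAt.sub ((hasDerivAt_id y).const_mul m)).deriv
    simpa using is_const_of_deriv_eq_zero (hF'.sub (differentiable_id.const_mul m))
      (fun y => by rw [hderiv, hslope, mul_one, sub_self]) x 0
  have hm : F 1 - F 0 = m := by linarith [hline 1]
  rw [hm]
  linarith [hline τ]

def IsAffineOnRankOneLines (f : ℝ × ℝ × ℝ → ℝ) : Prop :=
  ∀ a b c s t τ : ℝ, f (a + τ * s ^ 2, b + τ * (s * t), c + τ * t ^ 2) =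
    f (a, b, c) + τ * (f (a + s ^ 2, b + s * t, c + t ^ 2) - f (a, b, c))

def mongeAmpere (k₀ k₁ k₂ k₃ k₄ : ℝ) (p : ℝ × ℝ × ℝ) : ℝ :=
  k₀ * (p.1 * p.2.2 - p.2.1 ^ 2) + k₁ * p.1 + k₂ * p.2.1 + k₃ * p.2.2 + k₄

theorem isAffineOnRankOneLines_mongeAmpere (k₀ k₁ k₂ k₃ k₄ : ℝ) :
    IsAffineOnRankOneLines (mongeAmpere k₀ k₁ k₂ k₃ k₄) := by
  intro a b c s t τ
  simp only [mongeAmpere]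
  ring

namespace IsAffineOnRankOneLines

variable {f g : ℝ × ℝ × ℝ → ℝ}

theorem sub (hf : IsAffineOnRankOneLines f) (hg : IsAffineOnRankOneLines g) :
    IsAffineOnRankOneLines (f - g) := by
  intro a b c s t τ
  simp only [Pi.sub_apply, hf a b c s t τ, hg a b c s t τ]
  ring

theorem apply_eq_bilinear (hg : IsAffineOnRankOneLines g) (x y z : ℝ) :
    g (x, y, z) = g (0, y, 0) + x * (g (1, y, 0) - g (0, y, 0)) + z * (g (0, y, 1) - g (0, y, 0))
      + x * z * (g (1, y, 1) - g (1, y, 0) - g (0, y, 1) + g (0, y, 0)) := by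
  have hfst (z : ℝ) : g (x, y, z) = g (0, y, z) + x * (g (1, y, z) - g (0, y, z)) := by
    simpa using hg 0 y z 1 0 x
  have hthd : g (x, y, z) = g (x, y, 0) + z * (g (x, y, 1) - g (x, y, 0)) := by
    simpa using hg x y 0 0 1 z
  rw [hthd, hfst 0, hfst 1]
  ring

theorem apply_eq_along_diagonal (hg : IsAffineOnRankOneLines g) (x y z : ℝ) :
    g (x, y, z) =
      g (x - y, 0, z - y) + y * (g (x - y + 1, 1, z - y + 1) - g (x - y, 0, z - y)) := by
  simpa using hg (x - y) 0 (z - y) 1 1 y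

theorem eq_zero (hg : IsAffineOnRankOneLines g) (h₀₀₀ : g (0, 0, 0) = 0)
    (h₁₀₀ : g (1, 0, 0) = 0) (h₀₀₁ : g (0, 0, 1) = 0) (h₁₀₁ : g (1, 0, 1) = 0)
    (h₀₁₀ : g (0, 1, 0) = 0) : g = 0 := by
  have hplane (x z : ℝ) : g (x, 0, z) = 0 := by
    rw [hg.apply_eq_bilinear, h₀₀₀, h₁₀₀, h₀₀₁, h₁₀₁]
    ring
  obtain ⟨u, v, w, hform⟩ : ∃ u v w : ℝ, ∀ x y z, g (x, y, z) =
      y * ((x - y + 1) * u + (z - y + 1) * v + (x - y + 1) * (z - y + 1) * w) := by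
    refine ⟨g (1, 1, 0), g (0, 1, 1), g (1, 1, 1) - g (1, 1, 0) - g (0, 1, 1), fun x y z => ?_⟩
    rw [hg.apply_eq_along_diagonal, hplane, hg.apply_eq_bilinear _ 1, h₀₁₀]
    ring
  -- Along the rank-one lines through `0` in directions `(1, -1, 1)` and `(1, 2, 4)` this form is a
  -- cubic in `τ`; its affinity there forces `u = v = w = 0`.
  have h₁ := hg 0 0 0 1 (-1) (-1 / 2)
  have h₂ := hg 0 0 0 1 (-1) (-1)
  have h₃ := hg 0 0 0 1 2 (-1)
  simp only [hform] at h₁ h₂ h₃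
  ring_nf at h₁ h₂ h₃
  have hu : u = 0 := by linarith
  have hv : v = 0 := by linarith
  have hw : w = 0 := by linarith
  ext ⟨x, y, z⟩
  simp [hform, hu, hv, hw]

end IsAffineOnRankOneLines

theorem isAffineOnRankOneLines_iff_exists_eq_mongeAmpere {f : ℝ × ℝ × ℝ → ℝ} :
    IsAffineOnRankOneLines f ↔ ∃ k₀ k₁ k₂ k₃ k₄ : ℝ, f = mongeAmpere k₀ k₁ k₂ k₃ k₄ := by
  refine ⟨fun hf => ?_, ?_⟩
  · refine ⟨f (1, 0, 1) - f (1, 0, 0) - f (0, 0, 1) + f (0, 0, 0), f (1, 0, 0) - f (0, 0, 0),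
      f (0, 1, 0) + f (1, 0, 1) - f (1, 0, 0) - f (0, 0, 1), f (0, 0, 1) - f (0, 0, 0), f (0, 0, 0),
      sub_eq_zero.mp ?_⟩
    apply (hf.sub (isAffineOnRankOneLines_mongeAmpere _ _ _ _ _)).eq_zero <;>
      simp only [Pi.sub_apply, mongeAmpere] <;> ring
  · rintro ⟨k₀, k₁, k₂, k₃, k₄, rfl⟩
    exact isAffineOnRankOneLines_mongeAmpere k₀ k₁ k₂ k₃ k₄

theorem forall_iteratedDeriv_two_rankOneLine_eq_zero_iff {f : ℝ × ℝ × ℝ → ℝ}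
    (hf : ContDiff ℝ 2 f) :
    (∀ a b c s t τ : ℝ, iteratedDeriv 2
        (fun τ' : ℝ => f (a + τ' * s ^ 2, b + τ' * (s * t), c + τ' * t ^ 2)) τ = 0) ↔
      IsAffineOnRankOneLines f := by
  refine forall₅_congr fun a b c s t => ?_
  have hF : ContDiff ℝ 2 (fun τ' : ℝ => f (a + τ' * s ^ 2, b + τ' * (s * t), c + τ' * t ^ 2)) :=
    hf.comp (by fun_prop)
  rw [forall_iteratedDeriv_two_eq_zero_iff hF]
  simp

/-- n = 2, r = 1 case of the BGG characterisation: a smooth function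
`f(a,b,c)` on `ℝ³` has vanishing second derivative along all rank-one directions
`(s², st, t²)` if and only if `f(a,b,c) = k0(ac − b²) + k1·a + k2·b + k3·c + k4`
for some real constants `k0, …, k4`, i.e. iff `f` cuts out a Monge–Ampère equation. -/
theorem second_derivative_vanishes_on_rank_one_iff_mongeAmpere
    (f : ℝ × ℝ × ℝ → ℝ) (hf : ContDiff ℝ (⊤ : ℕ∞) f) :
    (∀ a b c s t : ℝ, ∀ τ : ℝ,
        iteratedDeriv 2 (fun τ' : ℝ => f (a + τ' * s ^ 2, b + τ' * (s * t), c + τ' * t ^ 2)) τ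
          = 0) ↔
    (∃ k0 k1 k2 k3 k4 : ℝ, ∀ a b c : ℝ,
        f (a, b, c) = k0 * (a * c - b ^ 2) + k1 * a + k2 * b + k3 * c + k4) := by
  rw [forall_iteratedDeriv_two_rankOneLine_eq_zero_iff (hf.of_le (WithTop.coe_le_coe.mpr le_top)),
    isAffineOnRankOneLines_iff_exists_eq_mongeAmpere]
  simp only [funext_iff, Prod.forall, mongeAmpere]
end
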